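/- arXiv:0809.5063 — 2 statements merged into one kernel-verified Lean document; each statement's English description precedes it below -/
import Mathlib

section
/- For a quasi-independent distribution on 4 bits with strength {f, δ_f, δ_{¬f}}, the probability of the event 'exactly two bits have errors among 4 specified error pairs, with no bit flagged' plus the event 'at least one flagged bit and at least one unflagged bit with an error forming one of 4 specified pairs' is at most 4·δ_{¬f}² + 8·f·δ_{¬f}. -/
open Finset

/-- Definition 1 (quasi-independent errors). -/
def QuasiIndep (n : ℕ) (P : (Fin n → Bool) → (Fin n → Bool) → ℝ)
    (f δf δnf : ℝ) : Prop :=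
  ∀ J K L : Finset (Fin n), Disjoint J K → L ⊆ K →
    (∑ u : Fin n → Bool, ∑ v : Fin n → Bool,
      if (∀ i ∈ J, u i = true ∧ v i = false) ∧ (∀ i ∈ K, v i = true) ∧
          (∀ i ∈ L, u i = true)
      then P u v else 0)
      ≤ δnf ^ J.card * δf ^ L.card * f ^ (K.card - L.card)

/-- The bound δ^(out)_{¬f} = 4(δ^(in)_{¬f})² + 8 f^(in) δ^(in)_{¬f} of the DECODE
function: the probability of 'exactly two bits have errors forming one of 4
specified error pairs, with no bit flagged', plus the probability of 'at least one
flagged bit together with an unflagged erroneous bit forming one of the 4 specified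
pairs', is at most 4·δ_{¬f}² + 8·f·δ_{¬f}. -/
theorem decode_unflagged_error_bound
    (P : (Fin 4 → Bool) → (Fin 4 → Bool) → ℝ)
    (hPnn : ∀ u v, 0 ≤ P u v)
    (f δf δnf : ℝ)
    (hf0 : 0 ≤ f) (hδf0 : 0 ≤ δf) (hδnf0 : 0 ≤ δnf)
    (hP : QuasiIndep 4 P f δf δnf)
    (pairs : Fin 4 → Fin 4 × Fin 4)
    (hpairs : ∀ k, (pairs k).1 ≠ (pairs k).2) :
    (∑ u : Fin 4 → Bool, ∑ v : Fin 4 → Bool,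
        if ((Finset.univ.filter fun i => u i = true).card = 2 ∧
            (∃ k, u (pairs k).1 = true ∧ u (pairs k).2 = true) ∧
            (∀ i, v i = false))
        then P u v else 0)
      +
    (∑ u : Fin 4 → Bool, ∑ v : Fin 4 → Bool,
        if (∃ k, (v (pairs k).1 = true ∧ v (pairs k).2 = false ∧
                    u (pairs k).2 = true) ∨
                 (v (pairs k).2 = true ∧ v (pairs k).1 = false ∧
                    u (pairs k).1 = true))
        then P u v else 0)
      ≤ 4 * δnf ^ 2 + 8 * f * δnf := by
  classical
  set C1 : Fin 4 → (Fin 4 → Bool) → (Fin 4 → Bool) → Prop := fun k u v =>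
    (u (pairs k).1 = true ∧ v (pairs k).1 = false) ∧
      u (pairs k).2 = true ∧ v (pairs k).2 = false with hC1
  set C2 : Fin 4 → (Fin 4 → Bool) → (Fin 4 → Bool) → Prop := fun k u v =>
    (u (pairs k).2 = true ∧ v (pairs k).2 = false) ∧ v (pairs k).1 = true with hC2
  set C3 : Fin 4 → (Fin 4 → Bool) → (Fin 4 → Bool) → Prop := fun k u v =>
    (u (pairs k).1 = true ∧ v (pairs k).1 = false) ∧ v (pairs k).2 = true with hC3
  have hite1 : ∀ (k : Fin 4) (u v : Fin 4 → Bool), 0 ≤ (if C1 k u v then P u v else 0) := by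
    intro k u v; by_cases hc : C1 k u v
    · rw [if_pos hc]; exact hPnn u v
    · rw [if_neg hc]
  have hite2 : ∀ (k : Fin 4) (u v : Fin 4 → Bool), 0 ≤ (if C2 k u v then P u v else 0) := by
    intro k u v; by_cases hc : C2 k u v
    · rw [if_pos hc]; exact hPnn u v
    · rw [if_neg hc]
  have hite3 : ∀ (k : Fin 4) (u v : Fin 4 → Bool), 0 ≤ (if C3 k u v then P u v else 0) := by
    intro k u v; by_cases hc : C3 k u v
    · rw [if_pos hc]; exact hPnn u v
    · rw [if_neg hc]
  have hB1 : ∀ k, (∑ u : Fin 4 → Bool, ∑ v : Fin 4 → Bool,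
      if C1 k u v then P u v else 0) ≤ δnf ^ 2 := by
    intro k
    have h := hP {(pairs k).1, (pairs k).2} ∅ ∅ (Finset.disjoint_empty_right _)
      (Finset.Subset.refl _)
    simpa [hC1, Finset.card_pair (hpairs k)] using h
  have hB2 : ∀ k, (∑ u : Fin 4 → Bool, ∑ v : Fin 4 → Bool,
      if C2 k u v then P u v else 0) ≤ δnf * f := by
    intro k
    have h := hP {(pairs k).2} {(pairs k).1} ∅
      (Finset.disjoint_singleton.mpr (hpairs k).symm) (Finset.empty_subset _)
    simpa [hC2] using h
  have hB3 : ∀ k, (∑ u : Fin 4 → Bool, ∑ v : Fin 4 → Bool,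
      if C3 k u v then P u v else 0) ≤ δnf * f := by
    intro k
    have h := hP {(pairs k).1} {(pairs k).2} ∅
      (Finset.disjoint_singleton.mpr (hpairs k)) (Finset.empty_subset _)
    simpa [hC3] using h
  have hpt1 : ∀ u v : Fin 4 → Bool,
      (if ((Finset.univ.filter fun i => u i = true).card = 2 ∧
            (∃ k, u (pairs k).1 = true ∧ u (pairs k).2 = true) ∧
            (∀ i, v i = false))
        then P u v else 0)
      ≤ ∑ k : Fin 4, if C1 k u v then P u v else 0 := by
    intro u v
    by_cases h : ((Finset.univ.filter fun i => u i = true).card = 2 ∧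
            (∃ k, u (pairs k).1 = true ∧ u (pairs k).2 = true) ∧
            (∀ i, v i = false))
    · rw [if_pos h]
      obtain ⟨-, ⟨k, hk1, hk2⟩, hv⟩ := h
      have hck : C1 k u v := ⟨⟨hk1, hv _⟩, hk2, hv _⟩
      calc P u v = (if C1 k u v then P u v else 0) := (if_pos hck).symm
        _ ≤ _ := Finset.single_le_sum (fun j _ => hite1 j u v) (Finset.mem_univ k)
    · rw [if_neg h]
      exact Finset.sum_nonneg fun k _ => hite1 k u v
  have hpt2 : ∀ u v : Fin 4 → Bool,
      (if (∃ k, (v (pairs k).1 = true ∧ v (pairs k).2 = false ∧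
                    u (pairs k).2 = true) ∨
                 (v (pairs k).2 = true ∧ v (pairs k).1 = false ∧
                    u (pairs k).1 = true))
        then P u v else 0)
      ≤ (∑ k : Fin 4, if C2 k u v then P u v else 0)
        + ∑ k : Fin 4, if C3 k u v then P u v else 0 := by
    intro u v
    have hn2 : (0:ℝ) ≤ ∑ k : Fin 4, if C2 k u v then P u v else 0 :=
      Finset.sum_nonneg fun k _ => hite2 k u v
    have hn3 : (0:ℝ) ≤ ∑ k : Fin 4, if C3 k u v then P u v else 0 :=
      Finset.sum_nonneg fun k _ => hite3 k u v
    by_cases h : (∃ k, (v (pairs k).1 = true ∧ v (pairs k).2 = false ∧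
                    u (pairs k).2 = true) ∨
                 (v (pairs k).2 = true ∧ v (pairs k).1 = false ∧
                    u (pairs k).1 = true))
    · rw [if_pos h]
      obtain ⟨k, hk | hk⟩ := h
      · have hck : C2 k u v := ⟨⟨hk.2.2, hk.2.1⟩, hk.1⟩
        have h1 : P u v ≤ ∑ k : Fin 4, if C2 k u v then P u v else 0 :=
          calc P u v = (if C2 k u v then P u v else 0) := (if_pos hck).symm
            _ ≤ _ := Finset.single_le_sum (fun j _ => hite2 j u v) (Finset.mem_univ k)
        linarith
      · have hck : C3 k u v := ⟨⟨hk.2.2, hk.2.1⟩, hk.1⟩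
        have h1 : P u v ≤ ∑ k : Fin 4, if C3 k u v then P u v else 0 :=
          calc P u v = (if C3 k u v then P u v else 0) := (if_pos hck).symm
            _ ≤ _ := Finset.single_le_sum (fun j _ => hite3 j u v) (Finset.mem_univ k)
        linarith
    · rw [if_neg h]; linarith
  have hswap1 : (∑ u : Fin 4 → Bool, ∑ v : Fin 4 → Bool, ∑ k : Fin 4,
        (if C1 k u v then P u v else 0))
      = ∑ k : Fin 4, ∑ u : Fin 4 → Bool, ∑ v : Fin 4 → Bool,
        (if C1 k u v then P u v else 0) :=
    calc _ = ∑ u : Fin 4 → Bool, ∑ k : Fin 4, ∑ v : Fin 4 → Bool,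
          (if C1 k u v then P u v else 0) :=
        Finset.sum_congr rfl fun u _ => Finset.sum_comm
      _ = _ := Finset.sum_comm
  have hswap2 : (∑ u : Fin 4 → Bool, ∑ v : Fin 4 → Bool, ∑ k : Fin 4,
        (if C2 k u v then P u v else 0))
      = ∑ k : Fin 4, ∑ u : Fin 4 → Bool, ∑ v : Fin 4 → Bool,
        (if C2 k u v then P u v else 0) :=
    calc _ = ∑ u : Fin 4 → Bool, ∑ k : Fin 4, ∑ v : Fin 4 → Bool,
          (if C2 k u v then P u v else 0) :=
        Finset.sum_congr rfl fun u _ => Finset.sum_comm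
      _ = _ := Finset.sum_comm
  have hswap3 : (∑ u : Fin 4 → Bool, ∑ v : Fin 4 → Bool, ∑ k : Fin 4,
        (if C3 k u v then P u v else 0))
      = ∑ k : Fin 4, ∑ u : Fin 4 → Bool, ∑ v : Fin 4 → Bool,
        (if C3 k u v then P u v else 0) :=
    calc _ = ∑ u : Fin 4 → Bool, ∑ k : Fin 4, ∑ v : Fin 4 → Bool,
          (if C3 k u v then P u v else 0) :=
        Finset.sum_congr rfl fun u _ => Finset.sum_comm
      _ = _ := Finset.sum_comm
  have hs1 : (∑ u : Fin 4 → Bool, ∑ v : Fin 4 → Bool,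
        if ((Finset.univ.filter fun i => u i = true).card = 2 ∧
            (∃ k, u (pairs k).1 = true ∧ u (pairs k).2 = true) ∧
            (∀ i, v i = false))
        then P u v else 0) ≤ 4 * δnf ^ 2 := by
    calc _ ≤ ∑ u : Fin 4 → Bool, ∑ v : Fin 4 → Bool, ∑ k : Fin 4,
          (if C1 k u v then P u v else 0) :=
        Finset.sum_le_sum fun u _ => Finset.sum_le_sum fun v _ => hpt1 u v
      _ = ∑ k : Fin 4, ∑ u : Fin 4 → Bool, ∑ v : Fin 4 → Bool,
          (if C1 k u v then P u v else 0) := hswap1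
      _ ≤ ∑ _k : Fin 4, δnf ^ 2 := Finset.sum_le_sum fun k _ => hB1 k
      _ = 4 * δnf ^ 2 := by simp [Finset.sum_const]
  have hs2 : (∑ u : Fin 4 → Bool, ∑ v : Fin 4 → Bool,
        if (∃ k, (v (pairs k).1 = true ∧ v (pairs k).2 = false ∧
                    u (pairs k).2 = true) ∨
                 (v (pairs k).2 = true ∧ v (pairs k).1 = false ∧
                    u (pairs k).1 = true))
        then P u v else 0) ≤ 8 * f * δnf := by
    calc _ ≤ ∑ u : Fin 4 → Bool, ∑ v : Fin 4 → Bool,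
          ((∑ k : Fin 4, if C2 k u v then P u v else 0)
            + ∑ k : Fin 4, if C3 k u v then P u v else 0) :=
        Finset.sum_le_sum fun u _ => Finset.sum_le_sum fun v _ => hpt2 u v
      _ = (∑ u : Fin 4 → Bool, ∑ v : Fin 4 → Bool, ∑ k : Fin 4,
            (if C2 k u v then P u v else 0))
          + ∑ u : Fin 4 → Bool, ∑ v : Fin 4 → Bool, ∑ k : Fin 4,
            (if C3 k u v then P u v else 0) := by
        simp only [Finset.sum_add_distrib]
      _ = (∑ k : Fin 4, ∑ u : Fin 4 → Bool, ∑ v : Fin 4 → Bool,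
            (if C2 k u v then P u v else 0))
          + ∑ k : Fin 4, ∑ u : Fin 4 → Bool, ∑ v : Fin 4 → Bool,
            (if C3 k u v then P u v else 0) := by rw [hswap2, hswap3]
      _ ≤ (∑ _k : Fin 4, δnf * f) + ∑ _k : Fin 4, δnf * f := by
        gcongr with k hk k hk
        exacts [hB2 k, hB3 k]
      _ = 8 * f * δnf := by simp [Finset.sum_const]; ring
  linarith
end

section
/- Define D as in the DECODE function: D(f, δ_f, δ_{¬f}) = (f', δ'_f, δ'_{¬f}) with f' = 4δ_{¬f} + 4f², δ'_f = 2δ_{¬f} + 4f·δ_f + 4f²(2δ_{¬f}+3δ_f), δ'_{¬f} = 4δ_{¬f}² + 8f·δ_{¬f}. If initially f = δ_f = 0 and δ_{¬f} = ε with 0 ≤ ε ≤ 10⁻², then the iterates (f^(j), δ_f^(j), δ_{¬f}^(j)) = D^j(0, 0, ε) satisfy δ_{¬f}^(j) → 0 as j → ∞. -/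
open Filter

/-- The DECODE strength-update map D of Table I (Eqs. (4)-(6)). -/
noncomputable def decodeMap : ℝ × ℝ × ℝ → ℝ × ℝ × ℝ :=
  fun p =>
    (4 * p.2.2 + 4 * p.1 ^ 2,
     2 * p.2.2 + 4 * p.1 * p.2.1 + 4 * p.1 ^ 2 * (2 * p.2.2 + 3 * p.2.1),
     4 * p.2.2 ^ 2 + 8 * p.1 * p.2.2)

/-- Starting from f = δ_f = 0 and δ_{¬f} = ε with 0 ≤ ε ≤ 10⁻², the unflagged
error strength of the iterates D^j(0,0,ε) tends to 0 as j → ∞. -/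
theorem decodeMap_iterates_tendsto_zero (ε : ℝ) (hε0 : 0 ≤ ε) (hε : ε ≤ 1 / 100) :
    Tendsto (fun j : ℕ => (decodeMap^[j] (0, 0, ε)).2.2) atTop (nhds 0) := by
  have key : ∀ j : ℕ,
      0 ≤ (decodeMap^[j] (0, 0, ε)).1 ∧ (decodeMap^[j] (0, 0, ε)).1 ≤ 1 / 20 ∧
      0 ≤ (decodeMap^[j] (0, 0, ε)).2.2 ∧
      (decodeMap^[j] (0, 0, ε)).2.2 ≤ ε * (1 / 2) ^ j := by
    intro j
    induction j with
    | zero => simp [hε0]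
    | succ n ih =>
      obtain ⟨hf0, hf, hd0, hd⟩ := ih
      have hpow : (0:ℝ) < (1 / 2 : ℝ) ^ n := by positivity
      have hpow1 : ((1 / 2 : ℝ)) ^ n ≤ 1 := by
        apply pow_le_one₀ <;> norm_num
      have hd100 : (decodeMap^[n] (0, 0, ε)).2.2 ≤ 1 / 100 := by
        calc (decodeMap^[n] (0, 0, ε)).2.2 ≤ ε * (1 / 2) ^ n := hd
        _ ≤ (1/100) * 1 := by
            apply mul_le_mul hε hpow1 (le_of_lt hpow) (by norm_num)
        _ = 1 / 100 := by ring
      rw [Function.iterate_succ_apply']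
      set f := (decodeMap^[n] (0, 0, ε)).1
      set d := (decodeMap^[n] (0, 0, ε)).2.2
      refine ⟨by simp [decodeMap]; positivity, ?_, by simp [decodeMap]; positivity, ?_⟩
      · show 4 * d + 4 * f ^ 2 ≤ 1 / 20
        nlinarith
      · show 4 * d ^ 2 + 8 * f * d ≤ ε * (1 / 2) ^ (n + 1)
        have : 4 * d ^ 2 + 8 * f * d ≤ (1 / 2) * d := by nlinarith
        calc 4 * d ^ 2 + 8 * f * d ≤ (1 / 2) * d := this
        _ ≤ (1 / 2) * (ε * (1 / 2) ^ n) := by linarith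
        _ = ε * (1 / 2) ^ (n + 1) := by ring
  have h1 : Tendsto (fun j : ℕ => ε * (1 / 2 : ℝ) ^ j) atTop (nhds 0) := by
    have := tendsto_pow_atTop_nhds_zero_of_lt_one (by norm_num : (0:ℝ) ≤ 1/2)
      (by norm_num : (1/2:ℝ) < 1)
    simpa using this.const_mul ε
  exact squeeze_zero (fun j => (key j).2.2.1) (fun j => (key j).2.2.2) h1
end
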